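/- If g : (-1,1) → ℝ is twice differentiable, satisfies (1-z²)·g'(z) = 6(z-1)·Li₂((1-z)/2) on (-1,1), and g(z) → 0 as z → 1⁻, then g(z) = 12·Li₃((z+1)/2) - 6·ln((z+1)/2)·Li₂((z+1)/2) - π²·ln((z+1)/2) - 12·ζ(3) for all z ∈ (-1,1). -/

import Mathlib

open Real Filter Set
open scoped Topology

noncomputable def Li2 (x : ℝ) : ℝ := ∑' k : ℕ, x ^ (k + 1) / ((k : ℝ) + 1) ^ 2

noncomputable def Li3 (x : ℝ) : ℝ := ∑' k : ℕ, x ^ (k + 1) / ((k : ℝ) + 1) ^ 3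

lemma polylog_hasDerivAt (p : ℕ) {x : ℝ} (hx : |x| < 1) :
    HasDerivAt (fun y => ∑' k : ℕ, y ^ (k + 1) / ((k : ℝ) + 1) ^ (p + 1))
      (∑' k : ℕ, x ^ k / ((k : ℝ) + 1) ^ p) x := by
  set r : ℝ := (|x| + 1) / 2 with hr
  have hr0 : 0 < r := by positivity
  have hxr : |x| < r := by rw [hr]; linarith
  have hr1 : r < 1 := by rw [hr]; linarith
  refine hasDerivAt_tsum_of_isPreconnected
    (summable_geometric_of_lt_one hr0.le hr1) isOpen_Ioo (convex_Ioo (-r) r).isPreconnected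
    (u := fun k : ℕ => r ^ k) (g' := fun k y => y ^ k / ((k : ℝ) + 1) ^ p)
    (fun k y _ => ?_) (fun k y hy => ?_) (y₀ := 0) (by constructor <;> [linarith; exact hr0]) ?_
    (abs_lt.mp hxr)
  · have h := (hasDerivAt_pow (k + 1) y).div_const (((k : ℝ) + 1) ^ (p + 1))
    convert h using 1
    · rfl
    have hk : ((k : ℝ) + 1) ≠ 0 := by positivity
    push_cast
    field_simp
    ring
  · have hyr : |y| ≤ r := le_of_lt (abs_lt.mpr hy)
    have hk1 : (1:ℝ) ≤ ((k : ℝ) + 1) ^ p :=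
      one_le_pow₀ (by linarith [Nat.cast_nonneg (α := ℝ) k])
    have h1 : ‖y ^ k / ((k : ℝ) + 1) ^ p‖ = |y| ^ k / ((k : ℝ) + 1) ^ p := by
      rw [norm_div, norm_pow, norm_pow]
      simp [abs_of_nonneg (by positivity : (0:ℝ) ≤ (k : ℝ) + 1)]
    rw [h1]
    calc |y| ^ k / ((k : ℝ) + 1) ^ p ≤ |y| ^ k := div_le_self (by positivity) hk1
      _ ≤ r ^ k := pow_le_pow_left₀ (abs_nonneg y) hyr k
  · exact summable_zero.congr (by intro k; simp)

lemma li2_hasDerivAt {x : ℝ} (hx : |x| < 1) :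
    HasDerivAt Li2 (∑' k : ℕ, x ^ k / ((k : ℝ) + 1)) x := by
  have h := polylog_hasDerivAt 1 hx
  simp only [pow_one] at h
  exact h.congr_of_eventuallyEq (Eventually.of_forall fun y => by simp [Li2])

lemma li3_hasDerivAt {x : ℝ} (hx : |x| < 1) :
    HasDerivAt Li3 (∑' k : ℕ, x ^ k / ((k : ℝ) + 1) ^ 2) x := by
  have h := polylog_hasDerivAt 2 hx
  exact h.congr_of_eventuallyEq (Eventually.of_forall fun y => by norm_num [Li3])

lemma li2_deriv_val {x : ℝ} (hx : |x| < 1) (hx0 : x ≠ 0) :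
    (∑' k : ℕ, x ^ k / ((k : ℝ) + 1)) = -Real.log (1 - x) / x := by
  have h := (hasSum_pow_div_log_of_abs_lt_one hx).tsum_eq
  have h2 : (∑' k : ℕ, x ^ (k + 1) / ((k : ℝ) + 1)) = x * ∑' k : ℕ, x ^ k / ((k : ℝ) + 1) := by
    rw [← tsum_mul_left]
    congr 1; funext k; rw [pow_succ, mul_comm (x ^ k) x, mul_div_assoc]
  rw [h2] at h
  push_cast at h
  field_simp
  linarith [h]

lemma li3_deriv_val {x : ℝ} (hx0 : x ≠ 0) :
    (∑' k : ℕ, x ^ k / ((k : ℝ) + 1) ^ 2) = Li2 x / x := by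
  have h2 : Li2 x = x * ∑' k : ℕ, x ^ k / ((k : ℝ) + 1) ^ 2 := by
    rw [Li2, ← tsum_mul_left]
    congr 1; funext k; rw [pow_succ, mul_comm (x ^ k) x, mul_div_assoc]
  rw [h2, mul_div_cancel_left₀ _ hx0]

lemma polylog_continuousOn {p : ℕ} (hs : Summable (fun k : ℕ => 1 / ((k : ℝ) + 1) ^ p)) :
    ContinuousOn (fun x : ℝ => ∑' k : ℕ, x ^ (k + 1) / ((k : ℝ) + 1) ^ p)
      (Icc (-1 : ℝ) 1) := by
  refine continuousOn_tsum (fun k => ((continuous_pow _).div_const _).continuousOn) hs ?_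
  intro k x hx
  have hx1 : |x| ≤ 1 := abs_le.mpr ⟨hx.1, hx.2⟩
  rw [norm_div, norm_pow, Real.norm_eq_abs, Real.norm_eq_abs,
    abs_of_nonneg (by positivity : (0:ℝ) ≤ ((k : ℝ) + 1) ^ p)]
  have : |x| ^ (k + 1) ≤ 1 := pow_le_one₀ (abs_nonneg x) hx1
  gcongr

lemma summable_inv_sq : Summable (fun k : ℕ => 1 / ((k : ℝ) + 1) ^ 2) := by
  have h := (summable_nat_add_iff (f := fun n : ℕ => 1 / (n : ℝ) ^ 2) 1).mpr
    (summable_one_div_nat_pow.mpr one_lt_two)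
  exact h.congr (by intro n; push_cast; ring_nf)

lemma summable_inv_cube : Summable (fun k : ℕ => 1 / ((k : ℝ) + 1) ^ 3) := by
  have h := (summable_nat_add_iff (f := fun n : ℕ => 1 / (n : ℝ) ^ 3) 1).mpr
    (summable_one_div_nat_pow.mpr (by norm_num))
  exact h.congr (by intro n; push_cast; ring_nf)

lemma li2_continuousOn : ContinuousOn Li2 (Icc (-1 : ℝ) 1) :=
  polylog_continuousOn summable_inv_sq

lemma li3_continuousOn : ContinuousOn Li3 (Icc (-1 : ℝ) 1) :=
  polylog_continuousOn summable_inv_cube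

lemma li2_one : Li2 1 = π ^ 2 / 6 := by
  have h0 := hasSum_zeta_two
  have h := (hasSum_nat_add_iff' (f := fun n : ℕ => (1 : ℝ) / (n : ℝ) ^ 2) 1).mpr h0
  simp only [Finset.range_one, Finset.sum_singleton, Nat.cast_zero] at h
  norm_num at h
  have h2 : HasSum (fun k : ℕ => (1:ℝ) ^ (k + 1) / ((k : ℝ) + 1) ^ 2) (π ^ 2 / 6) := by
    refine h.congr_fun fun k => ?_
    push_cast
    norm_num
  exact h2.tsum_eq

lemma li2_zero : Li2 0 = 0 := by
  simp [Li2]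

lemma const_of_hasDerivAt_zero {a b : ℝ} {f : ℝ → ℝ}
    (h : ∀ x ∈ Ioo a b, HasDerivAt f 0 x) {x y : ℝ}
    (hx : x ∈ Ioo a b) (hy : y ∈ Ioo a b) : f x = f y := by
  have key : ∀ u v : ℝ, u ∈ Ioo a b → v ∈ Ioo a b → u < v → f u = f v := by
    intro u v hu hv huv
    have hsub : Icc u v ⊆ Ioo a b := fun z hz => ⟨lt_of_lt_of_le hu.1 hz.1, lt_of_le_of_lt hz.2 hv.2⟩
    have hcont : ContinuousOn f (Icc u v) := fun z hz =>
      (h z (hsub hz)).continuousAt.continuousWithinAt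
    obtain ⟨c, _, hc⟩ := exists_hasDerivAt_eq_slope f (fun _ => 0) huv hcont
      (fun z hz => h z (hsub (Ioo_subset_Icc_self hz)))
    have hne : v - u ≠ 0 := by intro hvu; rw [sub_eq_zero] at hvu; exact absurd hvu (ne_of_gt huv)
    have hz : f v - f u = 0 := by
      have := hc.symm
      rwa [div_eq_iff hne, zero_mul] at this
    linarith
  rcases lt_trichotomy x y with hlt | heq | hgt
  · exact key x y hx hy hlt
  · rw [heq]
  · exact (key y x hy hx hgt).symm

lemma log_mul_log_tendsto :
    Tendsto (fun u : ℝ => Real.log u * Real.log (1 - u)) (𝓝[Ioo (0:ℝ) 1] 1) (𝓝 0) := by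
  have h1 : Tendsto (fun u : ℝ => (u - 1) * Real.log (1 - u)) (𝓝 1) (𝓝 0) := by
    have hc : Tendsto (fun u : ℝ => 1 - u) (𝓝 1) (𝓝 0) := by
      have h := ((continuous_const (y := (1:ℝ))).sub continuous_id).tendsto (1:ℝ)
      simpa [Pi.sub_def] using h
    have := (Real.continuous_mul_log.tendsto 0).comp hc
    simp only [Function.comp, zero_mul, Real.log_zero] at this
    have h2 : Tendsto (fun u : ℝ => -((1 - u) * Real.log (1 - u))) (𝓝 1) (𝓝 (-0)) := this.neg
    simp only [neg_zero] at h2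
    exact h2.congr (fun u => by ring)
  have hslope : Tendsto (fun u : ℝ => Real.log u / (u - 1)) (𝓝[Ioo (0:ℝ) 1] 1) (𝓝 1) := by
    have hd : HasDerivAt Real.log 1 1 := by simpa using Real.hasDerivAt_log one_ne_zero
    have := (hasDerivAt_iff_tendsto_slope.mp hd).mono_left
      (nhdsWithin_mono 1 (fun z (hz : z ∈ Ioo (0:ℝ) 1) => (ne_of_lt hz.2 : z ≠ 1)))
    exact this.congr (fun u => by simp [slope_def_field])
  have hprod := hslope.mul (h1.mono_left nhdsWithin_le_nhds)
  rw [one_mul] at hprod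
  refine hprod.congr' ?_
  filter_upwards [self_mem_nhdsWithin] with u hu
  have : u - 1 ≠ 0 := by have := hu.2; intro h; apply absurd hu.2; linarith [sub_eq_zero.mp h]
  field_simp

lemma li2_reflection {u : ℝ} (h0 : 0 < u) (h1 : u < 1) :
    Li2 u + Li2 (1 - u) + Real.log u * Real.log (1 - u) = π ^ 2 / 6 := by
  set R : ℝ → ℝ := fun v => Li2 v + Li2 (1 - v) + Real.log v * Real.log (1 - v) with hR
  have hderiv : ∀ v ∈ Ioo (0:ℝ) 1, HasDerivAt R 0 v := by
    intro v hv
    obtain ⟨hv0, hv1⟩ := hv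
    have habs : |v| < 1 := abs_lt.mpr ⟨by linarith, hv1⟩
    have habs' : |1 - v| < 1 := abs_lt.mpr ⟨by linarith, by linarith⟩
    have hA : HasDerivAt Li2 (-Real.log (1 - v) / v) v := by
      have h := li2_hasDerivAt habs
      rwa [li2_deriv_val habs (ne_of_gt hv0)] at h
    have hid : HasDerivAt (fun w : ℝ => 1 - w) (-1) v := by
      simpa using (hasDerivAt_id v).const_sub 1
    have hB : HasDerivAt (fun w => Li2 (1 - w)) (Real.log v / (1 - v)) v := by
      have hB0 : HasDerivAt Li2 (-Real.log (1 - (1 - v)) / (1 - v)) (1 - v) := by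
        have h := li2_hasDerivAt habs'
        rwa [li2_deriv_val habs' (by linarith : (1 : ℝ) - v ≠ 0)] at h
      have h := hB0.comp v hid
      have heq : -Real.log (1 - (1 - v)) / (1 - v) * -1 = Real.log v / (1 - v) := by
        have : (1 : ℝ) - (1 - v) = v := by ring
        rw [this]; ring
      rwa [heq] at h
    have hlogu : HasDerivAt Real.log v⁻¹ v := Real.hasDerivAt_log (ne_of_gt hv0)
    have hlog1u : HasDerivAt (fun w => Real.log (1 - w)) ((1 - v)⁻¹ * (-1)) v := by
      exact (Real.hasDerivAt_log (by linarith : (1:ℝ) - v ≠ 0)).comp v hid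
    have hC := hlogu.mul hlog1u
    have htot := (hA.add hB).add hC
    have : -Real.log (1 - v) / v + Real.log v / (1 - v) +
        (v⁻¹ * Real.log (1 - v) + Real.log v * ((1 - v)⁻¹ * (-1))) = 0 := by
      field_simp
      ring
    rwa [this] at htot
  have hlim : Tendsto R (𝓝[Ioo (0:ℝ) 1] 1) (𝓝 (π ^ 2 / 6)) := by
    have t1 : Tendsto Li2 (𝓝[Ioo (0:ℝ) 1] 1) (𝓝 (Li2 1)) := by
      have h := (li2_continuousOn 1 (by norm_num)).tendsto
      exact h.mono_left (nhdsWithin_mono 1 (fun z hz => ⟨by linarith [hz.1], le_of_lt hz.2⟩))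
    have t2 : Tendsto (fun v => Li2 (1 - v)) (𝓝[Ioo (0:ℝ) 1] 1) (𝓝 0) := by
      have hc : Tendsto (fun v : ℝ => 1 - v) (𝓝 1) (𝓝 0) := by
        have h := ((continuous_const (y := (1:ℝ))).sub continuous_id).tendsto (1:ℝ)
        simpa [Pi.sub_def] using h
      have h := ((li2_hasDerivAt (by norm_num : |(0:ℝ)| < 1)).continuousAt.tendsto).comp hc
      rw [li2_zero] at h
      exact h.mono_left nhdsWithin_le_nhds
    have t3 := log_mul_log_tendsto
    have h := (t1.add t2).add t3
    rw [li2_one] at h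
    simpa using h
  have hconst : ∀ᶠ v in 𝓝[Ioo (0:ℝ) 1] 1, R v = R u := by
    filter_upwards [self_mem_nhdsWithin] with v hv
    exact const_of_hasDerivAt_zero hderiv hv ⟨h0, h1⟩
  have hlim2 : Tendsto R (𝓝[Ioo (0:ℝ) 1] 1) (𝓝 (R u)) :=
    Tendsto.congr' (by filter_upwards [hconst] with v hv; exact hv.symm) tendsto_const_nhds
  haveI := right_nhdsWithin_Ioo_neBot (by norm_num : (0:ℝ) < 1)
  exact tendsto_nhds_unique hlim2 hlim

theorem third_deriv_uniqueness (g : ℝ → ℝ)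
    (hdiff : ∀ z : ℝ, -1 < z → z < 1 →
      DifferentiableAt ℝ g z ∧ DifferentiableAt ℝ (deriv g) z)
    (heq : ∀ z : ℝ, -1 < z → z < 1 →
      (1 - z ^ 2) * deriv g z = 6 * (z - 1) * Li2 ((1 - z) / 2))
    (hlim : Tendsto g (nhdsWithin 1 (Iio 1)) (nhds 0)) :
    ∀ z : ℝ, -1 < z → z < 1 →
      g z = 12 * Li3 ((z + 1) / 2) - 6 * Real.log ((z + 1) / 2) * Li2 ((z + 1) / 2)
        - π ^ 2 * Real.log ((z + 1) / 2) - 12 * (∑' k : ℕ, 1 / ((k : ℝ) + 1) ^ 3) := by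
  set S : ℝ := ∑' k : ℕ, 1 / ((k : ℝ) + 1) ^ 3 with hS
  set F : ℝ → ℝ := fun z => 12 * Li3 ((z + 1) / 2) - 6 * Real.log ((z + 1) / 2) * Li2 ((z + 1) / 2)
      - π ^ 2 * Real.log ((z + 1) / 2) - 12 * S with hF
  have hS1 : Li3 1 = S := by
    rw [hS, Li3]; congr 1; funext k; rw [one_pow]
  have hgF : ∀ z ∈ Ioo (-1:ℝ) 1, HasDerivAt (fun w => g w - F w) 0 z := by
    intro z hz
    obtain ⟨hz1, hz2⟩ := hz
    set u : ℝ := (z + 1) / 2 with hu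
    have hu0 : 0 < u := by rw [hu]; linarith
    have hu1 : u < 1 := by rw [hu]; linarith
    have habs : |u| < 1 := abs_lt.mpr ⟨by linarith, hu1⟩
    have hum : HasDerivAt (fun w : ℝ => (w + 1) / 2) (1/2 : ℝ) z := by
      simpa using ((hasDerivAt_id z).add_const 1).div_const 2
    have h3 : HasDerivAt Li3 (Li2 u / u) u := by
      have h := li3_hasDerivAt habs; rwa [li3_deriv_val (ne_of_gt hu0)] at h
    have h2 : HasDerivAt Li2 (-Real.log (1 - u) / u) u := by
      have h := li2_hasDerivAt habs; rwa [li2_deriv_val habs (ne_of_gt hu0)] at h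
    have hlog : HasDerivAt Real.log u⁻¹ u := Real.hasDerivAt_log (ne_of_gt hu0)
    have H3 := h3.comp z hum
    have H2 := h2.comp z hum
    have HL := hlog.comp z hum
    have hFd : HasDerivAt F
        (12 * (Li2 u / u * (1/2)) - (6 * (u⁻¹ * (1/2)) * Li2 u
          + 6 * Real.log u * (-Real.log (1 - u) / u * (1/2)))
          - π ^ 2 * (u⁻¹ * (1/2))) z := by
      exact (((H3.const_mul 12).sub ((HL.const_mul 6).mul H2)).sub (HL.const_mul (π^2))).sub_const (12 * S)
    have hrefl := li2_reflection hu0 hu1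
    have h1u : (1 - z) / 2 = 1 - u := by rw [hu]; ring
    have he := heq z hz1 hz2
    rw [h1u] at he
    have hz2pos : (0:ℝ) < 1 - z ^ 2 := by nlinarith
    have hz2ne : (1 : ℝ) - z ^ 2 ≠ 0 := ne_of_gt hz2pos
    have hgd : deriv g z = 6 * (z - 1) * Li2 (1 - u) / (1 - z ^ 2) := by
      field_simp
      linarith [he]
    have hkey : 12 * (Li2 u / u * (1/2)) - (6 * (u⁻¹ * (1/2)) * Li2 u
          + 6 * Real.log u * (-Real.log (1 - u) / u * (1/2)))
          - π ^ 2 * (u⁻¹ * (1/2)) = deriv g z := by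
      rw [hgd]
      have hune : u ≠ 0 := ne_of_gt hu0
      have hz1ne : (1:ℝ) + z ≠ 0 := by linarith
      have hz2ne' : (1:ℝ) - z ≠ 0 := by linarith
      have huz : u = (z + 1) / 2 := hu
      field_simp
      linear_combination (6*(1-z^2)) * hrefl + (-12*(z-1)*Li2 (1-u)) * hu
    have hgd' : HasDerivAt g (deriv g z) z := (hdiff z hz1 hz2).1.hasDerivAt
    have := hgd'.sub hFd
    rw [← hkey] at this
    rwa [sub_self] at this
  intro z hz1 hz2
  have hconst : ∀ v ∈ Ioo (-1:ℝ) 1, g v - F v = g z - F z := fun v hv =>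
    const_of_hasDerivAt_zero hgF hv ⟨hz1, hz2⟩
  have hm : Tendsto (fun w : ℝ => (w + 1) / 2) (𝓝[Ioo (-1:ℝ) 1] 1) (𝓝[Ioo (0:ℝ) 1] 1) := by
    have hc : ContinuousWithinAt (fun w : ℝ => (w + 1) / 2) (Ioo (-1:ℝ) 1) 1 :=
      ((continuous_id.add continuous_const).div_const 2).continuousWithinAt
    have hmaps : MapsTo (fun w : ℝ => (w + 1) / 2) (Ioo (-1:ℝ) 1) (Ioo (0:ℝ) 1) := by
      intro w hw
      exact ⟨by linarith [hw.1], by linarith [hw.2]⟩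
    have h := hc.tendsto_nhdsWithin hmaps
    rw [show ((1:ℝ) + 1) / 2 = 1 from by norm_num] at h
    exact h
  have hsub : Ioo (0:ℝ) 1 ⊆ Icc (-1:ℝ) 1 := fun w hw => ⟨by linarith [hw.1], le_of_lt hw.2⟩
  have T3 : Tendsto (fun w : ℝ => Li3 ((w + 1) / 2)) (𝓝[Ioo (-1:ℝ) 1] 1) (𝓝 (Li3 1)) :=
    (((li3_continuousOn 1 (by norm_num)).tendsto.mono_left (nhdsWithin_mono 1 hsub)).comp hm)
  have T2 : Tendsto (fun w : ℝ => Li2 ((w + 1) / 2)) (𝓝[Ioo (-1:ℝ) 1] 1) (𝓝 (Li2 1)) :=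
    (((li2_continuousOn 1 (by norm_num)).tendsto.mono_left (nhdsWithin_mono 1 hsub)).comp hm)
  have TL : Tendsto (fun w : ℝ => Real.log ((w + 1) / 2)) (𝓝[Ioo (-1:ℝ) 1] 1) (𝓝 0) := by
    have h := (Real.continuousAt_log one_ne_zero).tendsto.comp (hm.mono_right nhdsWithin_le_nhds)
    rwa [Real.log_one] at h
  have hFlim : Tendsto F (𝓝[Ioo (-1:ℝ) 1] 1) (𝓝 0) := by
    have h := (((T3.const_mul 12).sub ((TL.const_mul 6).mul T2)).sub
      (TL.const_mul (π ^ 2))).sub (tendsto_const_nhds (x := 12 * S))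
    rw [hS1] at h
    rw [show (12 * S - 6 * 0 * Li2 1 - π ^ 2 * 0 - 12 * S : ℝ) = 0 from by ring] at h
    exact h
  have hglim : Tendsto g (𝓝[Ioo (-1:ℝ) 1] 1) (𝓝 0) :=
    hlim.mono_left (nhdsWithin_mono 1 (fun w hw => hw.2))
  have hlim0 : Tendsto (fun w => g w - F w) (𝓝[Ioo (-1:ℝ) 1] 1) (𝓝 0) := by
    have h := hglim.sub hFlim
    rwa [sub_zero] at h
  have hlimc : Tendsto (fun w => g w - F w) (𝓝[Ioo (-1:ℝ) 1] 1) (𝓝 (g z - F z)) := by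
    refine Tendsto.congr' ?_ (tendsto_const_nhds (x := g z - F z))
    filter_upwards [self_mem_nhdsWithin] with v hv
    exact (hconst v hv).symm
  haveI := right_nhdsWithin_Ioo_neBot (by norm_num : (-1:ℝ) < 1)
  have hzero : g z - F z = 0 := tendsto_nhds_unique hlimc hlim0
  have : g z = F z := by linarith
  rw [this, hF]
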